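/- (Corollary 1.) Let d ≥ 3 and let u : ℝ × ℝ^d → ℝ^d be a smooth real Schur flow satisfying the barotropic Euler equation with smooth potential Π. Set M = ⌊(d+1)/2⌋ and for 1 ≤ i ≤ M let Ω_i be the antisymmetric 2-form field with (Ω_i)_{jk} = ∂_j (U_i)_k − ∂_k (U_i)_j, where (U_i)_k = u_k if k ∈ {2i−1, 2i} and k ≤ d, and (U_i)_k = 0 otherwise. Then: (a) for any real constants c_1, …, c_M, the 2-form field Σ_{i=1}^M c_i Ω_i is Lie-transported by u; and (b) for any i, i' ∈ {1, …, M}, the 4-form field Ω_i ∧ Ω_{i'} is Lie-transported by u (in the p-form sense). -/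

import Mathlib

/-- Partial derivative in time of a function on `ℝ × ℝ^d`. -/
noncomputable def pdt {d : ℕ} (f : ℝ × (Fin d → ℝ) → ℝ) (p : ℝ × (Fin d → ℝ)) : ℝ :=
  fderiv ℝ f p (1, 0)

/-- Partial derivative in the `j`-th spatial coordinate of a function on `ℝ × ℝ^d`. -/
noncomputable def pdx {d : ℕ} (j : Fin d) (f : ℝ × (Fin d → ℝ) → ℝ) (p : ℝ × (Fin d → ℝ)) : ℝ :=
  fderiv ℝ f p (0, Pi.single j 1)

/-- Real Schur flow: with 1-based indices `J = j+1`, `K = k+1`, we have `∂_J u_K = 0`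
whenever `J > 2⌈K/2⌉`; here `⌈K/2⌉ = (K+1)/2` in natural-number division. -/
def IsRSF {d : ℕ} (u : Fin d → ℝ × (Fin d → ℝ) → ℝ) : Prop :=
  ∀ j k : Fin d, 2 * (((k : ℕ) + 1 + 1) / 2) < (j : ℕ) + 1 → ∀ p, pdx j (u k) p = 0

/-!
Write `g_{jk} = ∂_j u_k` and `D_t = ∂_t + u · ∇`. Differentiating the Euler equation gives
`D_t g_{jk} + ∑_m g_{jm} g_{mk} = -∂_j ∂_k Π`, and from this, for any weights `χ`, the 2-form
`χ_k g_{jk} - χ_j g_{kj}` is Lie-transported up to the defect `(χ_j - χ_k) ∂_j ∂_k Π`.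
For a real Schur flow the Hessian of `Π` is block diagonal with respect to the coordinate pairs
`{2i-1, 2i}`: if `k` lies in an earlier pair than `j`, then `g_{jk}` and every product
`g_{jm} g_{mk}` vanish. So the defect vanishes whenever `χ` is constant on each pair, which covers
each `Ω_i` and every combination `∑ c_i Ω_i`. For the wedge products, `D_t` obeys the Leibniz
rule, so tensor products, index permutations and constant linear combinations of Lie-transported
tensors are Lie-transported, and `Ω_i ∧ Ω_{i'}` is built from these.
-/

open Finset

section DirectionalDerivative

variable {E : Type*} [NormedAddCommGroup E] [NormedSpace ℝ E] {f g : E → ℝ} {x : E}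

theorem ContDiff.fderiv_apply_right {n : ℕ} (hf : ContDiff ℝ (n + 1) f) (v : E) :
    ContDiff ℝ n (fun y => fderiv ℝ f y v) :=
  (hf.fderiv_right le_rfl).clm_apply contDiff_const

theorem fderiv_fderiv_apply_comm (hf : ContDiff ℝ 2 f) (v w : E) :
    fderiv ℝ (fun y => fderiv ℝ f y w) x v = fderiv ℝ (fun y => fderiv ℝ f y v) x w := by
  have hdf : DifferentiableAt ℝ (fderiv ℝ f) x :=
    ((hf.fderiv_right le_rfl).differentiable one_ne_zero).differentiableAt
  have expand : ∀ a b, fderiv ℝ (fun y => fderiv ℝ f y b) x a = fderiv ℝ (fderiv ℝ f) x a b := by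
    intro a b
    rw [fderiv_clm_apply hdf (differentiableAt_const b)]
    simp
  rw [expand, expand]
  exact (hf.contDiffAt.isSymmSndFDerivAt (by simp)).eq v w

theorem fderiv_mul_apply (hf : DifferentiableAt ℝ f x) (hg : DifferentiableAt ℝ g x) (v : E) :
    fderiv ℝ (fun y => f y * g y) x v = fderiv ℝ f x v * g x + f x * fderiv ℝ g x v := by
  rw [fderiv_fun_mul hf hg]
  simp only [add_apply, smul_apply, smul_eq_mul]
  ring

theorem fderiv_sum_const_mul_apply {ι : Type*} (s : Finset ι) (c : ι → ℝ) {a : ι → E → ℝ}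
    (ha : ∀ i ∈ s, DifferentiableAt ℝ (a i) x) (v : E) :
    fderiv ℝ (fun y => ∑ i ∈ s, c i * a i y) x v = ∑ i ∈ s, c i * fderiv ℝ (a i) x v := by
  rw [fderiv_fun_sum fun i hi => (ha i hi).const_mul (c i), _root_.sum_apply]
  exact sum_congr rfl fun i hi => by rw [fderiv_const_mul (ha i hi)]; rfl

end DirectionalDerivative

section LieTransport

variable {d : ℕ} {u : Fin d → ℝ × (Fin d → ℝ) → ℝ}

/-- Index tuples of a covariant `p`-tensor field are maps `Fin p → Fin d`; antisymmetry is not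
required. -/
def IsLieTransported {p : ℕ} (u : Fin d → ℝ × (Fin d → ℝ) → ℝ)
    (a : (Fin p → Fin d) → ℝ × (Fin d → ℝ) → ℝ) : Prop :=
  ∀ J x, pdt (a J) x + ∑ m, u m x * pdx m (a J) x
    + ∑ m, ∑ s, a (Function.update J s m) x * pdx (J s) (u m) x = 0

theorem IsLieTransported.comp_perm {p : ℕ} {a : (Fin p → Fin d) → ℝ × (Fin d → ℝ) → ℝ}
    (ha : IsLieTransported u a) (σ : Equiv.Perm (Fin p)) :
    IsLieTransported u (fun J => a (J ∘ σ)) := by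
  intro J x
  convert ha (J ∘ σ) x using 2
  refine sum_congr rfl fun m _ => ?_
  rw [← Equiv.sum_comp σ]
  refine sum_congr rfl fun t _ => ?_
  dsimp only
  rw [Function.update_comp_equiv, Equiv.symm_apply_apply]
  rfl

theorem IsLieTransported.sum_const_mul {p : ℕ} {ι : Type*} (s : Finset ι) (c : ι → ℝ)
    {a : ι → (Fin p → Fin d) → ℝ × (Fin d → ℝ) → ℝ}
    (hdiff : ∀ i J, Differentiable ℝ (a i J)) (ha : ∀ i ∈ s, IsLieTransported u (a i)) :
    IsLieTransported u (fun J x => ∑ i ∈ s, c i * a i J x) := by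
  intro J x
  have hD : ∀ v, fderiv ℝ (fun y => ∑ i ∈ s, c i * a i J y) x v
      = ∑ i ∈ s, c i * fderiv ℝ (a i J) x v :=
    fderiv_sum_const_mul_apply s c (fun i _ => (hdiff i J).differentiableAt)
  simp only [pdt, pdx, hD]
  calc _ = ∑ i ∈ s, c i * (pdt (a i J) x + ∑ m, u m x * pdx m (a i J) x
        + ∑ m, ∑ t, a i (Function.update J t m) x * pdx (J t) (u m) x) := by
        simp only [pdt, pdx, mul_add, sum_add_distrib, mul_sum, sum_mul, mul_left_comm (c _)]
        congr 2
        · exact sum_comm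
        · rw [sum_comm (s := s)]
          refine sum_congr rfl fun m _ => ?_
          rw [sum_comm (s := s)]
          exact sum_congr rfl fun _ _ => sum_congr rfl fun _ _ => by ring
    _ = 0 := sum_eq_zero fun i hi => by rw [ha i hi J x, mul_zero]

def tensorField {p q : ℕ} (a : (Fin p → Fin d) → ℝ × (Fin d → ℝ) → ℝ)
    (b : (Fin q → Fin d) → ℝ × (Fin d → ℝ) → ℝ) :
    (Fin (p + q) → Fin d) → ℝ × (Fin d → ℝ) → ℝ :=
  fun J x => a (J ∘ Fin.castAdd q) x * b (J ∘ Fin.natAdd p) x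

theorem sum_tensorField_update {p q : ℕ} (a : (Fin p → Fin d) → ℝ × (Fin d → ℝ) → ℝ)
    (b : (Fin q → Fin d) → ℝ × (Fin d → ℝ) → ℝ) (J : Fin (p + q) → Fin d) (m : Fin d)
    (x : ℝ × (Fin d → ℝ)) (w : Fin d → ℝ) :
    ∑ s, tensorField a b (Function.update J s m) x * w (J s)
      = (∑ s, a (Function.update (J ∘ Fin.castAdd q) s m) x * w ((J ∘ Fin.castAdd q) s))
          * b (J ∘ Fin.natAdd p) x
        + a (J ∘ Fin.castAdd q) x
          * ∑ t, b (Function.update (J ∘ Fin.natAdd p) t m) x * w ((J ∘ Fin.natAdd p) t) := by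
  have hupdA : ∀ s, Function.update J (Fin.castAdd q s) m ∘ Fin.castAdd q
      = Function.update (J ∘ Fin.castAdd q) s m :=
    fun s => Function.update_comp_eq_of_injective _ (Fin.castAdd_injective p q) s m
  have hupdB : ∀ t, Function.update J (Fin.natAdd p t) m ∘ Fin.natAdd p
      = Function.update (J ∘ Fin.natAdd p) t m :=
    fun t => Function.update_comp_eq_of_injective _ (Fin.natAdd_injective q p) t m
  have hupdAB : ∀ s, Function.update J (Fin.castAdd q s) m ∘ Fin.natAdd p = J ∘ Fin.natAdd p :=
    fun s => Function.update_comp_eq_of_forall_ne _ _ fun t h => by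
      simp only [Fin.ext_iff, Fin.val_natAdd, Fin.val_castAdd] at h; omega
  have hupdBA : ∀ t, Function.update J (Fin.natAdd p t) m ∘ Fin.castAdd q = J ∘ Fin.castAdd q :=
    fun t => Function.update_comp_eq_of_forall_ne _ _ fun s h => by
      simp only [Fin.ext_iff, Fin.val_natAdd, Fin.val_castAdd] at h; omega
  simp only [tensorField, Fin.sum_univ_add, hupdA, hupdB, hupdAB, hupdBA, sum_mul, mul_sum]
  congr 1 <;> exact sum_congr rfl fun _ _ => by simp only [Function.comp_apply]; ring

theorem isLieTransported_tensorField {p q : ℕ} {a : (Fin p → Fin d) → ℝ × (Fin d → ℝ) → ℝ}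
    {b : (Fin q → Fin d) → ℝ × (Fin d → ℝ) → ℝ}
    (hda : ∀ J, Differentiable ℝ (a J)) (hdb : ∀ J, Differentiable ℝ (b J))
    (ha : IsLieTransported u a) (hb : IsLieTransported u b) :
    IsLieTransported u (tensorField a b) := by
  intro J x
  have hsum := fun m => sum_tensorField_update a b J m x fun k => pdx k (u m) x
  set A := J ∘ Fin.castAdd q
  set B := J ∘ Fin.natAdd p
  have hD : ∀ v, fderiv ℝ (tensorField a b J) x v
      = fderiv ℝ (a A) x v * b B x + a A x * fderiv ℝ (b B) x v :=
    fderiv_mul_apply (hda A x) (hdb B x)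
  have hpdt : pdt (tensorField a b J) x = pdt (a A) x * b B x + a A x * pdt (b B) x := hD _
  have hpdx : ∀ m, u m x * pdx m (tensorField a b J) x
      = u m x * pdx m (a A) x * b B x + a A x * (u m x * pdx m (b B) x) := fun m => by
    simp only [pdx, hD]; ring
  rw [hpdt, sum_congr rfl fun m _ => hpdx m, sum_congr rfl fun m _ => hsum m, sum_add_distrib,
    sum_add_distrib, ← sum_mul, ← mul_sum, ← sum_mul, ← mul_sum]
  linear_combination b B x * ha A x + a A x * hb B x

end LieTransport

section Forms

variable {d : ℕ} {u : Fin d → ℝ × (Fin d → ℝ) → ℝ}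

noncomputable def wedge (a b : (Fin 2 → Fin d) → ℝ × (Fin d → ℝ) → ℝ) :
    (Fin 4 → Fin d) → ℝ × (Fin d → ℝ) → ℝ :=
  fun J x => (1 / 4 : ℝ) * ∑ σ : Equiv.Perm (Fin 4),
    ((Equiv.Perm.sign σ : ℤ) : ℝ) * tensorField a b (J ∘ σ) x

theorem isLieTransported_wedge {a b : (Fin 2 → Fin d) → ℝ × (Fin d → ℝ) → ℝ}
    (hda : ∀ J, Differentiable ℝ (a J)) (hdb : ∀ J, Differentiable ℝ (b J))
    (ha : IsLieTransported u a) (hb : IsLieTransported u b) :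
    IsLieTransported u (wedge a b) := by
  have hwedge : wedge a b = fun J x => ∑ σ : Equiv.Perm (Fin 4),
      (1 / 4 * ((Equiv.Perm.sign σ : ℤ) : ℝ)) * tensorField a b (J ∘ σ) x := by
    funext J x
    simp only [wedge, mul_sum, mul_assoc]
  rw [hwedge]
  exact IsLieTransported.sum_const_mul _ _ (fun σ J => (hda _).mul (hdb _))
    fun σ _ => (isLieTransported_tensorField hda hdb ha hb).comp_perm σ

theorem isLieTransported_two_iff (a : Fin d → Fin d → ℝ × (Fin d → ℝ) → ℝ) :
    IsLieTransported u (fun J : Fin 2 → Fin d => a (J 0) (J 1)) ↔ ∀ j k x, pdt (a j k) x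
      + ∑ m, (u m x * pdx m (a j k) x + a m k x * pdx j (u m) x + a j m x * pdx k (u m) x) = 0 := by
  constructor
  · intro h j k x
    have := h ![j, k] x
    simpa [Fin.sum_univ_two, sum_add_distrib, add_assoc] using this
  · intro h J x
    have := h (J 0) (J 1) x
    simpa [Fin.sum_univ_two, sum_add_distrib, add_assoc, Function.update_apply] using this

theorem isLieTransported_four_iff (W : Fin d → Fin d → Fin d → Fin d → ℝ × (Fin d → ℝ) → ℝ) :
    IsLieTransported u (fun J : Fin 4 → Fin d => W (J 0) (J 1) (J 2) (J 3)) ↔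
      ∀ (j₁ j₂ j₃ j₄ : Fin d) (x : ℝ × (Fin d → ℝ)),
        pdt (W j₁ j₂ j₃ j₄) x + ∑ m, u m x * pdx m (W j₁ j₂ j₃ j₄) x
          + ∑ m, (W m j₂ j₃ j₄ x * pdx j₁ (u m) x + W j₁ m j₃ j₄ x * pdx j₂ (u m) x
              + W j₁ j₂ m j₄ x * pdx j₃ (u m) x + W j₁ j₂ j₃ m x * pdx j₄ (u m) x)
          = 0 := by
  constructor
  · intro h j₁ j₂ j₃ j₄ x
    have := h ![j₁, j₂, j₃, j₄] x
    simpa [Fin.sum_univ_four] using this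
  · intro h J x
    have := h (J 0) (J 1) (J 2) (J 3) x
    simpa [Fin.sum_univ_four, Function.update_apply] using this

end Forms

section Euler

variable {d : ℕ} {u : Fin d → ℝ × (Fin d → ℝ) → ℝ} {P f : ℝ × (Fin d → ℝ) → ℝ}

theorem ContDiff.pdx {n : ℕ} (hf : ContDiff ℝ (n + 1) f) (j : Fin d) : ContDiff ℝ n (pdx j f) :=
  hf.fderiv_apply_right _

theorem ContDiff.pdt {n : ℕ} (hf : ContDiff ℝ (n + 1) f) : ContDiff ℝ n (pdt f) :=
  hf.fderiv_apply_right _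

theorem pdx_pdx_comm (hf : ContDiff ℝ 2 f) (j k : Fin d) (x : ℝ × (Fin d → ℝ)) :
    pdx j (pdx k f) x = pdx k (pdx j f) x :=
  fderiv_fderiv_apply_comm hf _ _

theorem pdx_pdt_comm (hf : ContDiff ℝ 2 f) (j : Fin d) (x : ℝ × (Fin d → ℝ)) :
    pdx j (pdt f) x = pdt (pdx j f) x :=
  fderiv_fderiv_apply_comm hf _ _

def IsBarotropicEuler (u : Fin d → ℝ × (Fin d → ℝ) → ℝ) (P : ℝ × (Fin d → ℝ) → ℝ) : Prop :=
  ∀ k p, pdt (u k) p + ∑ j, u j p * pdx j (u k) p = -(pdx k P p)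

theorem IsBarotropicEuler.velocityGradient (hE : IsBarotropicEuler u P)
    (hu : ∀ k, ContDiff ℝ 2 (u k)) (j k : Fin d) (x : ℝ × (Fin d → ℝ)) :
    pdt (pdx j (u k)) x + ∑ m, (pdx j (u m) x * pdx m (u k) x + u m x * pdx m (pdx j (u k)) x)
      = -pdx j (pdx k P) x := by
  have hdu : ∀ m, DifferentiableAt ℝ (u m) x :=
    fun m => ((hu m).differentiable two_ne_zero).differentiableAt
  have hdg : ∀ m, DifferentiableAt ℝ (pdx m (u k)) x :=
    fun m => (((hu k).pdx m).differentiable one_ne_zero).differentiableAt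
  have hdt : DifferentiableAt ℝ (pdt (u k)) x :=
    ((hu k).pdt.differentiable one_ne_zero).differentiableAt
  have hE' := congrArg (fun F => fderiv ℝ F x (0, Pi.single j 1)) (funext (hE k))
  simp only [fderiv_fun_neg] at hE'
  have hdprod : ∀ m ∈ univ, DifferentiableAt ℝ (fun y => u m y * pdx m (u k) y) x :=
    fun m _ => (hdu m).mul (hdg m)
  rw [fderiv_fun_add hdt (DifferentiableAt.fun_sum hdprod), fderiv_fun_sum hdprod] at hE'
  simp only [add_apply, _root_.sum_apply, fderiv_mul_apply (hdu _) (hdg _)] at hE'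
  rw [← pdx_pdt_comm (hu k)]
  simp only [← pdx_pdx_comm (hu k) j]
  exact hE'

theorem IsBarotropicEuler.pdx_pdx_eq_zero (hE : IsBarotropicEuler u P)
    (hu : ∀ k, ContDiff ℝ 2 (u k)) {j k : Fin d} (hjk : ∀ y, pdx j (u k) y = 0)
    (x : ℝ × (Fin d → ℝ)) (hm : ∀ m, pdx j (u m) x = 0 ∨ pdx m (u k) x = 0) :
    pdx j (pdx k P) x = 0 := by
  have h := hE.velocityGradient hu j k x
  rw [show pdx j (u k) = fun _ => 0 from funext hjk] at h
  have hpdt0 : pdt (fun _ : ℝ × (Fin d → ℝ) => (0 : ℝ)) x = 0 := by simp [pdt]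
  have hpdx0 : ∀ m, pdx m (fun _ : ℝ × (Fin d → ℝ) => (0 : ℝ)) x = 0 := fun m => by simp [pdx]
  simp only [hpdt0, hpdx0, mul_zero, add_zero,
    sum_eq_zero fun m _ => mul_eq_zero.2 (hm m)] at h
  linarith

theorem IsRSF.pdx_eq_zero (hR : IsRSF u) {j k : Fin d} (hjk : (k : ℕ) / 2 < j / 2) :
    ∀ y, pdx j (u k) y = 0 :=
  hR j k (by omega)

theorem IsBarotropicEuler.pdx_pdx_eq_zero_of_isRSF (hE : IsBarotropicEuler u P)
    (hu : ∀ k, ContDiff ℝ 2 (u k)) (hP : ContDiff ℝ 2 P) (hR : IsRSF u) {j k : Fin d}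
    (hjk : (j : ℕ) / 2 ≠ k / 2) (x : ℝ × (Fin d → ℝ)) :
    pdx j (pdx k P) x = 0 := by
  have lower : ∀ j k : Fin d, (k : ℕ) / 2 < j / 2 → pdx j (pdx k P) x = 0 := by
    intro j k hjk
    refine hE.pdx_pdx_eq_zero hu (hR.pdx_eq_zero hjk) x fun m => ?_
    rcases lt_or_ge ((k : ℕ) / 2) (m / 2) with hkm | hmk
    · exact Or.inr (hR.pdx_eq_zero hkm x)
    · exact Or.inl (hR.pdx_eq_zero (by omega) x)
  rcases Nat.lt_or_gt_of_ne hjk with h | h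
  · rw [pdx_pdx_comm hP]
    exact lower k j h
  · exact lower j k h

end Euler

section Vorticity

variable {d : ℕ} {u : Fin d → ℝ × (Fin d → ℝ) → ℝ} {P : ℝ × (Fin d → ℝ) → ℝ}

/-- The vorticity for `χ = 1`; the paper's `Ω_i` when `χ` is the indicator of the `i`-th
coordinate pair. -/
noncomputable def weightedVorticity (u : Fin d → ℝ × (Fin d → ℝ) → ℝ) (χ : Fin d → ℝ)
    (j k : Fin d) : ℝ × (Fin d → ℝ) → ℝ :=
  fun x => χ k * pdx j (u k) x - χ j * pdx k (u j) x

theorem differentiable_weightedVorticity (hu : ∀ k, ContDiff ℝ 2 (u k)) (χ : Fin d → ℝ)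
    (j k : Fin d) : Differentiable ℝ (weightedVorticity u χ j k) :=
  have hg : ∀ j k, Differentiable ℝ (pdx j (u k)) :=
    fun j k => ((hu k).pdx j).differentiable one_ne_zero
  ((hg j k).const_mul (χ k)).sub ((hg k j).const_mul (χ j))

theorem weightedVorticity_lieDefect (hE : IsBarotropicEuler u P) (hu : ∀ k, ContDiff ℝ 2 (u k))
    (hP : ContDiff ℝ 2 P) (χ : Fin d → ℝ) (j k : Fin d) (x : ℝ × (Fin d → ℝ)) :
    pdt (weightedVorticity u χ j k) x + ∑ m, (u m x * pdx m (weightedVorticity u χ j k) x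
      + weightedVorticity u χ m k x * pdx j (u m) x + weightedVorticity u χ j m x * pdx k (u m) x)
      = (χ j - χ k) * pdx j (pdx k P) x := by
  set ω := weightedVorticity u χ
  have hg : ∀ j k, DifferentiableAt ℝ (pdx j (u k)) x :=
    fun j k => (((hu k).pdx j).differentiable one_ne_zero).differentiableAt
  have hD : ∀ v, fderiv ℝ (ω j k) x v
      = χ k * fderiv ℝ (pdx j (u k)) x v - χ j * fderiv ℝ (pdx k (u j)) x v := by
    intro v
    change fderiv ℝ (fun y => χ k * pdx j (u k) y - χ j * pdx k (u j) y) x v = _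
    rw [fderiv_fun_sub ((hg j k).const_mul _) ((hg k j).const_mul _),
      fderiv_const_mul (hg j k), fderiv_const_mul (hg k j)]
    rfl
  have hsum : ∑ m, (u m x * pdx m (ω j k) x + ω m k x * pdx j (u m) x + ω j m x * pdx k (u m) x)
      = χ k * ∑ m, (pdx j (u m) x * pdx m (u k) x + u m x * pdx m (pdx j (u k)) x)
        - χ j * ∑ m, (pdx k (u m) x * pdx m (u j) x + u m x * pdx m (pdx k (u j)) x) := by
    rw [mul_sum, mul_sum, ← sum_sub_distrib]
    refine sum_congr rfl fun m _ => ?_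
    simp only [pdx, hD, ω, weightedVorticity]
    ring
  have e₁ := hE.velocityGradient hu j k x
  have e₂ := hE.velocityGradient hu k j x
  rw [pdx_pdx_comm hP k j] at e₂
  rw [show pdt (ω j k) x = χ k * pdt (pdx j (u k)) x - χ j * pdt (pdx k (u j)) x from hD _, hsum]
  linear_combination χ k * e₁ - χ j * e₂

theorem isLieTransported_weightedVorticity (hE : IsBarotropicEuler u P)
    (hu : ∀ k, ContDiff ℝ 2 (u k)) (hP : ContDiff ℝ 2 P) (hR : IsRSF u) (χ : Fin d → ℝ)
    (hχ : ∀ j k : Fin d, (j : ℕ) / 2 = k / 2 → χ j = χ k) :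
    IsLieTransported u (fun J : Fin 2 → Fin d => weightedVorticity u χ (J 0) (J 1)) := by
  refine (isLieTransported_two_iff _).2 fun j k x => ?_
  rw [weightedVorticity_lieDefect hE hu hP χ j k x]
  by_cases h : (j : ℕ) / 2 = k / 2
  · rw [hχ j k h, sub_self, zero_mul]
  · rw [hE.pdx_pdx_eq_zero_of_isRSF hu hP hR h, mul_zero]

/-- With 0-based coordinates, `k` lies in the pair `{2i-1, 2i}` of 1-based coordinates iff
`k / 2 + 1 = i`. -/
noncomputable def pairIndicator (i : ℕ) (k : Fin d) : ℝ :=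
  if (k : ℕ) / 2 + 1 = i then 1 else 0

theorem pairIndicator_eq_of_div_two_eq (i : ℕ) {j k : Fin d} (h : (j : ℕ) / 2 = k / 2) :
    pairIndicator i j = pairIndicator i k := by
  rw [pairIndicator, pairIndicator, h]

theorem eq_weightedVorticity_pairIndicator {U : ℕ → Fin d → ℝ × (Fin d → ℝ) → ℝ}
    {Ω : ℕ → Fin d → Fin d → ℝ × (Fin d → ℝ) → ℝ}
    (hU : ∀ (i : ℕ) (k : Fin d), U i k =
      if (k : ℕ) + 1 = 2 * i - 1 ∨ (k : ℕ) + 1 = 2 * i then u k else fun _ => 0)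
    (hΩ : ∀ i j k x, Ω i j k x = pdx j (U i k) x - pdx k (U i j) x) (i : ℕ) :
    Ω i = weightedVorticity u (pairIndicator i) := by
  have hUi : ∀ j k x, pdx j (U i k) x = pairIndicator i k * pdx j (u k) x := by
    intro j k x
    rw [hU, pairIndicator]
    split_ifs <;> first | omega | simp [pdx]
  funext j k x
  rw [hΩ, hUi, hUi]
  rfl

end Vorticity

theorem rsf_corollary_combinations_and_wedges_general
    {d : ℕ}
    (u : Fin d → ℝ × (Fin d → ℝ) → ℝ) (P : ℝ × (Fin d → ℝ) → ℝ)
    (hu : ∀ k, ContDiff ℝ (⊤ : ℕ∞) (u k)) (hP : ContDiff ℝ (⊤ : ℕ∞) P)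
    (hRSF : IsRSF u)
    (heuler : ∀ k p, pdt (u k) p + ∑ j, u j p * pdx j (u k) p = -(pdx k P p))
    (U : ℕ → Fin d → ℝ × (Fin d → ℝ) → ℝ)
    (hU : ∀ (i : ℕ) (k : Fin d), U i k =
      if (k : ℕ) + 1 = 2 * i - 1 ∨ (k : ℕ) + 1 = 2 * i then u k else fun _ => 0)
    (Ω : ℕ → Fin d → Fin d → ℝ × (Fin d → ℝ) → ℝ)
    (hΩ : ∀ i j k x, Ω i j k x = pdx j (U i k) x - pdx k (U i j) x) :
    (∀ (c : ℕ → ℝ) (W : Fin d → Fin d → ℝ × (Fin d → ℝ) → ℝ),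
      (∀ j k x, W j k x = ∑ i ∈ Finset.Icc 1 ((d + 1) / 2), c i * Ω i j k x) →
      ∀ j k x, pdt (W j k) x
        + ∑ m, (u m x * pdx m (W j k) x + W m k x * pdx j (u m) x + W j m x * pdx k (u m) x)
        = 0) ∧
    (∀ i ∈ Finset.Icc 1 ((d + 1) / 2), ∀ i' ∈ Finset.Icc 1 ((d + 1) / 2),
      ∀ W : Fin d → Fin d → Fin d → Fin d → ℝ × (Fin d → ℝ) → ℝ,
      (∀ (j₁ j₂ j₃ j₄ : Fin d) (x : ℝ × (Fin d → ℝ)),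
        W j₁ j₂ j₃ j₄ x = (1 / 4 : ℝ)
          * ∑ σ : Equiv.Perm (Fin 4), ((Equiv.Perm.sign σ : ℤ) : ℝ)
              * (Ω i (![j₁, j₂, j₃, j₄] (σ 0)) (![j₁, j₂, j₃, j₄] (σ 1)) x
                 * Ω i' (![j₁, j₂, j₃, j₄] (σ 2)) (![j₁, j₂, j₃, j₄] (σ 3)) x)) →
      ∀ (j₁ j₂ j₃ j₄ : Fin d) (x : ℝ × (Fin d → ℝ)),
        pdt (W j₁ j₂ j₃ j₄) x + ∑ m, u m x * pdx m (W j₁ j₂ j₃ j₄) x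
          + ∑ m, (W m j₂ j₃ j₄ x * pdx j₁ (u m) x + W j₁ m j₃ j₄ x * pdx j₂ (u m) x
              + W j₁ j₂ m j₄ x * pdx j₃ (u m) x + W j₁ j₂ j₃ m x * pdx j₄ (u m) x)
          = 0) := by
  have hu₂ : ∀ k, ContDiff ℝ 2 (u k) := fun k => (hu k).of_le (WithTop.coe_le_coe.2 le_top)
  have hP₂ : ContDiff ℝ 2 P := hP.of_le (WithTop.coe_le_coe.2 le_top)
  have hvort := isLieTransported_weightedVorticity heuler hu₂ hP₂ hRSF
  obtain rfl : Ω = fun i => weightedVorticity u (pairIndicator i) :=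
    funext (eq_weightedVorticity_pairIndicator hU hΩ)
  refine ⟨fun c W hW => ?_, fun i _ i' _ W hW => ?_⟩
  · obtain rfl :
        W = weightedVorticity u fun k => ∑ i ∈ Icc 1 ((d + 1) / 2), c i * pairIndicator i k := by
      funext j k x
      simp only [hW, weightedVorticity, mul_sub, sum_sub_distrib, sum_mul, mul_assoc]
    exact (isLieTransported_two_iff _).1 <| hvort _ fun j k h =>
      sum_congr rfl fun i _ => by rw [pairIndicator_eq_of_div_two_eq i h]
  · have hwedge : (fun J : Fin 4 → Fin d => W (J 0) (J 1) (J 2) (J 3)) = wedge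
        (fun J => weightedVorticity u (pairIndicator i) (J 0) (J 1))
        (fun J => weightedVorticity u (pairIndicator i') (J 0) (J 1)) := by
      funext J x
      have hJ : ![J 0, J 1, J 2, J 3] = J := by ext q; fin_cases q <;> rfl
      rw [hW, hJ]
      rfl
    refine (isLieTransported_four_iff W).1 ?_
    rw [hwedge]
    exact isLieTransported_wedge (fun _ => differentiable_weightedVorticity hu₂ _ _ _)
      (fun _ => differentiable_weightedVorticity hu₂ _ _ _)
      (hvort _ fun _ _ => pairIndicator_eq_of_div_two_eq i)
      (hvort _ fun _ _ => pairIndicator_eq_of_div_two_eq i')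

/-- Corollary 1: for a real Schur flow solving the barotropic Euler equation,
(a) any constant-coefficient linear combination of the components `Ω_i` is Lie-transported
by `u` (in the 2-form sense), and (b) any wedge product `Ω_i ∧ Ω_{i'}` is Lie-transported
by `u` (in the 4-form sense). -/
theorem rsf_corollary_combinations_and_wedges
    {d : ℕ} (hd : 3 ≤ d)
    (u : Fin d → ℝ × (Fin d → ℝ) → ℝ) (P : ℝ × (Fin d → ℝ) → ℝ)
    (hu : ∀ k, ContDiff ℝ (⊤ : ℕ∞) (u k)) (hP : ContDiff ℝ (⊤ : ℕ∞) P)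
    (hRSF : IsRSF u)
    (heuler : ∀ k p, pdt (u k) p + ∑ j, u j p * pdx j (u k) p = -(pdx k P p))
    (U : ℕ → Fin d → ℝ × (Fin d → ℝ) → ℝ)
    (hU : ∀ (i : ℕ) (k : Fin d), U i k =
      if (k : ℕ) + 1 = 2 * i - 1 ∨ (k : ℕ) + 1 = 2 * i then u k else fun _ => 0)
    (Ω : ℕ → Fin d → Fin d → ℝ × (Fin d → ℝ) → ℝ)
    (hΩ : ∀ i j k x, Ω i j k x = pdx j (U i k) x - pdx k (U i j) x) :
    (∀ (c : ℕ → ℝ) (W : Fin d → Fin d → ℝ × (Fin d → ℝ) → ℝ),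
      (∀ j k x, W j k x = ∑ i ∈ Finset.Icc 1 ((d + 1) / 2), c i * Ω i j k x) →
      ∀ j k x, pdt (W j k) x
        + ∑ m, (u m x * pdx m (W j k) x + W m k x * pdx j (u m) x + W j m x * pdx k (u m) x)
        = 0) ∧
    (∀ i ∈ Finset.Icc 1 ((d + 1) / 2), ∀ i' ∈ Finset.Icc 1 ((d + 1) / 2),
      ∀ W : Fin d → Fin d → Fin d → Fin d → ℝ × (Fin d → ℝ) → ℝ,
      (∀ (j₁ j₂ j₃ j₄ : Fin d) (x : ℝ × (Fin d → ℝ)),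
        W j₁ j₂ j₃ j₄ x = (1 / 4 : ℝ)
          * ∑ σ : Equiv.Perm (Fin 4), ((Equiv.Perm.sign σ : ℤ) : ℝ)
              * (Ω i (![j₁, j₂, j₃, j₄] (σ 0)) (![j₁, j₂, j₃, j₄] (σ 1)) x
                 * Ω i' (![j₁, j₂, j₃, j₄] (σ 2)) (![j₁, j₂, j₃, j₄] (σ 3)) x)) →
      ∀ (j₁ j₂ j₃ j₄ : Fin d) (x : ℝ × (Fin d → ℝ)),
        pdt (W j₁ j₂ j₃ j₄) x + ∑ m, u m x * pdx m (W j₁ j₂ j₃ j₄) x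
          + ∑ m, (W m j₂ j₃ j₄ x * pdx j₁ (u m) x + W j₁ m j₃ j₄ x * pdx j₂ (u m) x
              + W j₁ j₂ m j₄ x * pdx j₃ (u m) x + W j₁ j₂ j₃ m x * pdx j₄ (u m) x)
          = 0) :=
  rsf_corollary_combinations_and_wedges_general u P hu hP hRSF heuler U hU Ω hΩ
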